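/- arXiv:2507.17666 — 5 statements merged into one kernel-verified Lean document; each statement's English description precedes it below -/
import Mathlib

section
/- For all reals a, b, c with a ≥ b ≥ c ≥ 0 and a + b + c ≤ 1, we have (1/6)(1 - a^3 - b^3 - c^3) - (1/8)(1 - a^2 - b^2 - c(1 - a - b))^2 ≤ 3/32. -/
/-! Put `x = a - b`, `y = b - c` and `u = 1 - a - b - c`, all nonnegative on the region.
Writing `1 = a + b + c + u` makes `96 (3/32 - LHS)` a homogeneous quartic in `x, y, c, u`,
and this quartic is `6 x² (x + 2y + c - u)²` plus a polynomial with nonnegative coefficients. -/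

theorem quartic_certificate_nonneg {x y c u : ℝ} (hx : 0 ≤ x) (hy : 0 ≤ y) (hc : 0 ≤ c)
    (hu : 0 ≤ u) :
    0 ≤ 6 * x ^ 2 * (x + 2 * y + c - u) ^ 2 + 3 * x ^ 4
      + 3 * c ^ 2 * (3 * c ^ 2 + 8 * y * c + 8 * y ^ 2 + 4 * x * c + 8 * x * y)
      + 12 * c * u * (c ^ 2 + 10 * y * c + 8 * y ^ 2 + 5 * x * c + 8 * x * y)
      + 6 * u ^ 2 * (11 * c ^ 2 + 28 * y * c + 12 * y ^ 2 + 14 * x * c + 12 * x * y)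
      + 4 * u ^ 3 * (5 * x + 10 * y + 9 * c) + 5 * u ^ 4 := by
  positivity

theorem final_three_var_ineq (a b c : ℝ) (hc : 0 ≤ c) (hcb : c ≤ b) (hba : b ≤ a)
    (hsum : a + b + c ≤ 1) :
    (1 / 6) * (1 - a ^ 3 - b ^ 3 - c ^ 3)
      - (1 / 8) * (1 - a ^ 2 - b ^ 2 - c * (1 - a - b)) ^ 2 ≤ 3 / 32 := by
  have h := quartic_certificate_nonneg (sub_nonneg.2 hba) (sub_nonneg.2 hcb) hc
    (by linarith : 0 ≤ 1 - a - b - c)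
  linear_combination (1 / 96) * h
end

section
/- Let x_1,...,x_n be nonnegative reals with ∑ x_i = 1 and n ≥ 1. Then (1/6)(1 - ∑ x_i^3) - (1/8)(1 - ∑ x_i^2)^2 ≤ 3/32. -/
/-! In terms of the power sums the claim reads `16 p₃ + 12 (1 - p₂)² ≥ 7`. If the largest entry
is at most `5/14`, then so is `p₂`, and Cauchy–Schwarz `p₂² ≤ p₃` suffices because
`28 p₂² - 24 p₂ + 5 = (14 p₂ - 5)(2 p₂ - 1)`.

Otherwise let `A ≥ B` be the two largest entries and `r` the mass of the others. By Cauchy–Schwarz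
and monotonicity in `p₂`, replacing the others by `r / min(B, r)` copies of `min(B, r)` does not
decrease the Lagrangian. This leaves either the three-point configuration `(A, B, r)` or `A`
followed by copies of `B`; in both, equalising the two smaller masses increases the Lagrangian,
which reduces everything to the value at `(c, (1-c)/2, (1-c)/2)`, where
`3/32 - λ = c² (9 c² - 8 c + 2) / 32`. -/

theorem Finset.sum_sq_le_mul_sum {ι : Type*} (S : Finset ι) {x : ι → ℝ} {M : ℝ}
    (hx : ∀ i ∈ S, 0 ≤ x i) (hM : ∀ i ∈ S, x i ≤ M) : ∑ i ∈ S, x i ^ 2 ≤ M * ∑ i ∈ S, x i := by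
  rw [Finset.mul_sum]
  exact Finset.sum_le_sum fun i hi => by
    rw [sq]; exact mul_le_mul_of_nonneg_right (hM i hi) (hx i hi)

theorem Finset.sq_sum_sq_le_sum_mul_sum_cube {ι : Type*} (S : Finset ι) {x : ι → ℝ}
    (hx : ∀ i ∈ S, 0 ≤ x i) : (∑ i ∈ S, x i ^ 2) ^ 2 ≤ (∑ i ∈ S, x i) * ∑ i ∈ S, x i ^ 3 :=
  Finset.sum_sq_le_sum_mul_sum_of_sq_le_mul S hx (fun i hi => pow_nonneg (hx i hi) 3)
    fun i _ => le_of_eq (by ring)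

/-- The Lagrangian of `BF(K_n)` at a point of the simplex with power sums `p₂ = ∑ xᵢ²` and
`p₃ = ∑ xᵢ³`. -/
noncomputable def powerSumLagrangian (p₂ p₃ : ℝ) : ℝ :=
  1 / 6 * (1 - p₃) - 1 / 8 * (1 - p₂) ^ 2

namespace powerSumLagrangian

theorem le_of_sq_le {p₂ p₃ : ℝ} (h : p₂ ^ 2 ≤ p₃) (hp₂ : p₂ ≤ 5 / 14) :
    powerSumLagrangian p₂ p₃ ≤ 3 / 32 := by
  unfold powerSumLagrangian
  nlinarith [mul_nonneg (by linarith : (0 : ℝ) ≤ 5 - 14 * p₂) (by linarith : (0 : ℝ) ≤ 1 - 2 * p₂)]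

theorem two_equal_le (c : ℝ) :
    powerSumLagrangian (c ^ 2 + 2 * ((1 - c) / 2) ^ 2) (c ^ 3 + 2 * ((1 - c) / 2) ^ 3)
      ≤ 3 / 32 := by
  have key : 3 / 32 - powerSumLagrangian (c ^ 2 + 2 * ((1 - c) / 2) ^ 2)
      (c ^ 3 + 2 * ((1 - c) / 2) ^ 3) = c ^ 2 * (9 * (c - 4 / 9) ^ 2 + 2 / 9) / 32 := by
    unfold powerSumLagrangian; ring
  have : 0 ≤ c ^ 2 * (9 * (c - 4 / 9) ^ 2 + 2 / 9) := by positivity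
  linarith

theorem three_point_le {a b c : ℝ} (h : a + b + c = 1) (hc : c ≤ 1 / 3) :
    powerSumLagrangian (a ^ 2 + b ^ 2 + c ^ 2) (a ^ 3 + b ^ 3 + c ^ 3) ≤ 3 / 32 := by
  obtain rfl : a = 1 - b - c := by linarith
  have hab : (1 - b - c) * b ≤ (1 - c) ^ 2 / 4 := by nlinarith [sq_nonneg (1 - c - 2 * b)]
  have hslope : 0 ≤ (1 - c) * (1 - 2 * c) - (1 - b - c) * b - (1 - c) ^ 2 / 4 := by nlinarith
  -- for fixed `c` this is a quadratic in `t = a b`, increasing for `t ≤ (1 - c)² / 4`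
  have key : powerSumLagrangian ((1 - b - c) ^ 2 + b ^ 2 + c ^ 2) ((1 - b - c) ^ 3 + b ^ 3 + c ^ 3)
      = powerSumLagrangian (c ^ 2 + 2 * ((1 - c) / 2) ^ 2) (c ^ 3 + 2 * ((1 - c) / 2) ^ 3)
        - ((1 - c) ^ 2 / 4 - (1 - b - c) * b)
          * ((1 - c) * (1 - 2 * c) - (1 - b - c) * b - (1 - c) ^ 2 / 4) / 2 := by
    unfold powerSumLagrangian; ring
  rw [key]
  linarith [two_equal_le c, mul_nonneg (sub_nonneg.2 hab) hslope]

/-- The point `a` together with `r / b` (not necessarily integrally many) copies of `b`. -/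
theorem copies_le {a b r : ℝ} (h : a + b + r = 1) (ha : 1 / 9 ≤ a) (hb : 0 ≤ b) (hbr : b ≤ r) :
    powerSumLagrangian (a ^ 2 + b ^ 2 + r * b) (a ^ 3 + b ^ 3 + r * b ^ 2) ≤ 3 / 32 := by
  obtain rfl : r = 1 - a - b := by linarith
  have hb' : 0 ≤ (1 - a) / 2 - b := by linarith
  have hslope : 0 ≤ 12 * (1 - a) * (2 + 2 * a - b - (1 - a) / 2) - 16 * (b + (1 - a) / 2) := by
    nlinarith
  have key : powerSumLagrangian (a ^ 2 + b ^ 2 + (1 - a - b) * b)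
        (a ^ 3 + b ^ 3 + (1 - a - b) * b ^ 2)
      = powerSumLagrangian (a ^ 2 + 2 * ((1 - a) / 2) ^ 2) (a ^ 3 + 2 * ((1 - a) / 2) ^ 3)
        - ((1 - a) / 2 - b) * (1 - a)
          * (12 * (1 - a) * (2 + 2 * a - b - (1 - a) / 2) - 16 * (b + (1 - a) / 2)) / 96 := by
    unfold powerSumLagrangian; ring
  rw [key]
  linarith [two_equal_le a, mul_nonneg (mul_nonneg hb' (by linarith : (0 : ℝ) ≤ 1 - a)) hslope]

/-- A tail of mass `r` with power sums `s`, `w` and entries at most `m` may be replaced by `r / m`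
copies of `m`: by Cauchy–Schwarz `w ≥ s² / r`, and `hm` makes the resulting quadratic in `s`
decreasing up to `s = r m`. -/
theorem le_of_tail {q p r m s w : ℝ} (hr : 0 ≤ r) (hs : 0 ≤ s) (hsm : s ≤ r * m)
    (hsw : s ^ 2 ≤ r * w) (hw : 0 ≤ w) (hm : 4 * m + 3 * r * m ≤ 3 * (1 - q)) :
    powerSumLagrangian (q + s) (p + w) ≤ powerSumLagrangian (q + r * m) (p + r * m ^ 2) := by
  rcases hr.eq_or_lt with rfl | hr
  · obtain rfl : s = 0 := by nlinarith
    unfold powerSumLagrangian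
    nlinarith
  have key : r * (powerSumLagrangian (q + r * m) (p + r * m ^ 2)
        - powerSumLagrangian (q + s) (p + w))
      = (16 * (r * w - s ^ 2)
        + (r * m - s) * (12 * r * (2 * (1 - q) - s - r * m) - 16 * (s + r * m))) / 96 := by
    unfold powerSumLagrangian; ring
  have hslope : 0 ≤ 12 * r * (2 * (1 - q) - s - r * m) - 16 * (s + r * m) := by
    nlinarith [mul_nonneg hr.le (sub_nonneg.2 hsm)]
  have : 0 ≤ r * (powerSumLagrangian (q + r * m) (p + r * m ^ 2)
      - powerSumLagrangian (q + s) (p + w)) := by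
    rw [key]
    linarith [mul_nonneg (sub_nonneg.2 hsm) hslope]
  linarith [(mul_nonneg_iff_of_pos_left hr).1 this]

theorem le_of_two_largest {A B r s w : ℝ} (h : A + B + r = 1) (hA : 1 / 9 ≤ A) (hBA : B ≤ A)
    (hB : 0 ≤ B) (hr : 0 ≤ r) (hs : 0 ≤ s) (hsB : s ≤ r * B) (hsr : s ≤ r ^ 2)
    (hsw : s ^ 2 ≤ r * w) (hw : 0 ≤ w) :
    powerSumLagrangian (A ^ 2 + B ^ 2 + s) (A ^ 3 + B ^ 3 + w) ≤ 3 / 32 := by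
  have hK (m : ℝ) (hm : 0 ≤ m) (hmB : m ≤ B) (hmr : m ≤ r) :
      4 * m + 3 * r * m ≤ 3 * (1 - (A ^ 2 + B ^ 2)) := by
    have hA0 : 0 ≤ A := hB.trans hBA
    have hexpand : 1 - (A ^ 2 + B ^ 2) = 2 * A * B + 2 * A * r + 2 * B * r + r ^ 2 := by
      linear_combination -(1 + A + B + r) * h
    have h4 : 4 * m = 4 * m * (A + B + r) := by rw [h, mul_one]
    nlinarith [mul_nonneg hA0 (sub_nonneg.2 hmB), mul_nonneg hB (sub_nonneg.2 hmr),
      mul_nonneg hr (sub_nonneg.2 (hmB.trans hBA)), mul_nonneg hr hr]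
  rcases le_total r B with hrB | hBr
  · calc _ ≤ powerSumLagrangian (A ^ 2 + B ^ 2 + r * r) (A ^ 3 + B ^ 3 + r * r ^ 2) :=
          le_of_tail hr hs (by linarith) hsw hw (hK r hr hrB le_rfl)
      _ = powerSumLagrangian (A ^ 2 + B ^ 2 + r ^ 2) (A ^ 3 + B ^ 3 + r ^ 3) := by ring_nf
      _ ≤ 3 / 32 := three_point_le h (by linarith)
  · calc _ ≤ powerSumLagrangian (A ^ 2 + B ^ 2 + r * B) (A ^ 3 + B ^ 3 + r * B ^ 2) :=
          le_of_tail hr hs hsB hsw hw (hK B hB le_rfl hBr)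
      _ ≤ 3 / 32 := copies_le h hA hB hBr

theorem le_of_sum_eq_one {ι : Type*} [DecidableEq ι] (S : Finset ι) (x : ι → ℝ)
    (hx : ∀ i ∈ S, 0 ≤ x i) (hsum : ∑ i ∈ S, x i = 1) :
    powerSumLagrangian (∑ i ∈ S, x i ^ 2) (∑ i ∈ S, x i ^ 3) ≤ 3 / 32 := by
  obtain ⟨m, hm, hmax⟩ :=
    S.exists_max_image x (Finset.nonempty_of_sum_ne_zero (f := x) (by simp [hsum]))
  by_cases hA : x m ≤ 5 / 14
  · have hp₂ : ∑ i ∈ S, x i ^ 2 ≤ x m := by simpa [hsum] using S.sum_sq_le_mul_sum hx hmax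
    exact le_of_sq_le (by simpa [hsum] using S.sq_sum_sq_le_sum_mul_sum_cube hx) (hp₂.trans hA)
  rcases (S.erase m).eq_empty_or_nonempty with hS | hS
  · obtain rfl : S = {m} :=
      ((Finset.erase_eq_empty_iff S m).1 hS).resolve_left (Finset.ne_empty_of_mem hm)
    simp only [Finset.sum_singleton] at hsum ⊢
    rw [hsum]
    norm_num [powerSumLagrangian]
  obtain ⟨m₂, hm₂, hmax₂⟩ := (S.erase m).exists_max_image x hS
  set T := (S.erase m).erase m₂
  have hsplit (f : ι → ℝ) : ∑ i ∈ S, f i = f m + f m₂ + ∑ i ∈ T, f i := by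
    rw [← Finset.add_sum_erase _ f hm, ← Finset.add_sum_erase _ f hm₂, add_assoc]
  have hT : ∀ i ∈ T, i ∈ S.erase m := fun i hi => Finset.mem_of_mem_erase hi
  have hxT : ∀ i ∈ T, 0 ≤ x i := fun i hi => hx i (Finset.mem_of_mem_erase (hT i hi))
  have hsB : ∑ i ∈ T, x i ^ 2 ≤ (∑ i ∈ T, x i) * x m₂ := by
    rw [mul_comm]
    exact T.sum_sq_le_mul_sum hxT fun i hi => hmax₂ i (hT i hi)
  rw [hsplit] at hsum
  rw [hsplit, hsplit]
  exact le_of_two_largest hsum (by linarith) (hmax m₂ (Finset.mem_of_mem_erase hm₂))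
    (hx m₂ (Finset.mem_of_mem_erase hm₂)) (Finset.sum_nonneg hxT)
    (Finset.sum_nonneg fun i _ => sq_nonneg _) hsB (Finset.sum_sq_le_sq_sum_of_nonneg hxT)
    (T.sq_sum_sq_le_sum_mul_sum_cube hxT) (Finset.sum_nonneg fun i hi => pow_nonneg (hxT i hi) 3)

end powerSumLagrangian

theorem complete_case_bound_general (n : ℕ) (x : ℕ → ℝ)
    (hx : ∀ i ∈ Finset.range n, 0 ≤ x i)
    (hsum : ∑ i ∈ Finset.range n, x i = 1) :
    (1 / 6) * (1 - ∑ i ∈ Finset.range n, x i ^ 3)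
      - (1 / 8) * (1 - ∑ i ∈ Finset.range n, x i ^ 2) ^ 2 ≤ 3 / 32 :=
  powerSumLagrangian.le_of_sum_eq_one (Finset.range n) x hx hsum

theorem complete_case_bound (n : ℕ) (hn : 1 ≤ n) (x : ℕ → ℝ)
    (hx : ∀ i ∈ Finset.range n, 0 ≤ x i)
    (hsum : ∑ i ∈ Finset.range n, x i = 1) :
    (1 / 6) * (1 - ∑ i ∈ Finset.range n, x i ^ 3)
      - (1 / 8) * (1 - ∑ i ∈ Finset.range n, x i ^ 2) ^ 2 ≤ 3 / 32 :=
  complete_case_bound_general n x hx hsum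
end

section
/- For all reals p_2, p_3 with there existing nonnegative reals x_1 ≥ x_2 ≥ x_3 ≥ 0, x_1 + x_2 + x_3 ≤ 1, such that p_3 ≥ x_1^3 + x_2^3 + x_3^3 and p_2 ≤ x_1^2 + x_2^2 + x_3(1 - x_1 - x_2): (1/6)(1 - p_3) - (1/8)(1 - p_2)^2 ≤ 3/32 provided p_2 ≤ 1. -/
/-!
Since `p₃ ≥ ∑ xᵢ³` and `p₂ ≤ q := x₁² + x₂² + x₃(1 - x₁ - x₂) ≤ 1`, it suffices to prove the bound at
`p₃ = ∑ xᵢ³`, `p₂ = q`, i.e. `12 (1 - q)² + 16 ∑ xᵢ³ ≥ 7`. Equality holds at `(1/2, 1/2, 0)`. Written in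
the nonnegative gaps `x₁ - x₂`, `x₂ - x₃`, `x₃`, `v = 1 - x₁ - x₂ - x₃` (and homogenised with
`1 = x₁ + x₂ + x₃ + v`), the difference has nonnegative coefficients except for a block
`(x₁ - x₂)² (6 (1 - 2 (x₁ + x₂))² + 3 (x₁ - x₂)²)`, which is a sum of squares.
-/

lemma sq_add_sq_add_mul_le_one {a b c : ℝ} (hc : 0 ≤ c) (hcb : c ≤ b) (hba : b ≤ a)
    (habc : a + b + c ≤ 1) : a ^ 2 + b ^ 2 + c * (1 - a - b) ≤ 1 := by
  nlinarith [mul_nonneg (hc.trans hcb) (hc.trans (hcb.trans hba))]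

lemma seven_le_sq_one_sub_add_sum_cubes {a b c : ℝ} (hc : 0 ≤ c) (hcb : c ≤ b) (hba : b ≤ a)
    (habc : a + b + c ≤ 1) :
    7 ≤ 12 * (1 - (a ^ 2 + b ^ 2 + c * (1 - a - b))) ^ 2 + 16 * (a ^ 3 + b ^ 3 + c ^ 3) := by
  obtain ⟨v, hv, hsum⟩ : ∃ v, 0 ≤ v ∧ a + b + c + v = 1 := ⟨1 - a - b - c, by linarith, by ring⟩
  have h_sos : 0 ≤ (a - b) ^ 2 * (6 * (1 - 2 * (a + b)) ^ 2 + 3 * (a - b) ^ 2) := by positivity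
  have h_quad : 0 ≤ (a - c) * (b - c) * ((3 * v + c) * (v + c)) :=
    mul_nonneg (mul_nonneg (by linarith) (by linarith)) (by positivity)
  have h_lin : 0 ≤ (a + b - 2 * c) * (5 * v ^ 3 + 21 * c * v ^ 2 + 15 * c ^ 2 * v + 3 * c ^ 3) :=
    mul_nonneg (by linarith) (by positivity)
  have h_free : 0 ≤ 5 * v ^ 4 + 36 * c * v ^ 3 + 66 * c ^ 2 * v ^ 2 + 12 * c ^ 3 * v + 9 * c ^ 4 := by
    positivity
  obtain rfl : v = 1 - a - b - c := by linarith
  linear_combination h_sos + 24 * h_quad + 4 * h_lin + h_free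

theorem p2_p3_bound_general (p2 p3 : ℝ)
    (h : ∃ x1 x2 x3 : ℝ, 0 ≤ x3 ∧ x3 ≤ x2 ∧ x2 ≤ x1 ∧ x1 + x2 + x3 ≤ 1 ∧
        x1 ^ 3 + x2 ^ 3 + x3 ^ 3 ≤ p3 ∧ p2 ≤ x1 ^ 2 + x2 ^ 2 + x3 * (1 - x1 - x2)) :
    (1 / 6) * (1 - p3) - (1 / 8) * (1 - p2) ^ 2 ≤ 3 / 32 := by
  obtain ⟨x1, x2, x3, h3, h32, h21, hsum, hp3, hp2⟩ := h
  have hq := sq_add_sq_add_mul_le_one h3 h32 h21 hsum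
  have hsq : (1 - (x1 ^ 2 + x2 ^ 2 + x3 * (1 - x1 - x2))) ^ 2 ≤ (1 - p2) ^ 2 :=
    pow_le_pow_left₀ (by linarith) (by linarith) 2
  linarith [seven_le_sq_one_sub_add_sum_cubes h3 h32 h21 hsum]

theorem p2_p3_bound (p2 p3 : ℝ)
    (h : ∃ x1 x2 x3 : ℝ, 0 ≤ x3 ∧ x3 ≤ x2 ∧ x2 ≤ x1 ∧ x1 + x2 + x3 ≤ 1 ∧
        x1 ^ 3 + x2 ^ 3 + x3 ^ 3 ≤ p3 ∧ p2 ≤ x1 ^ 2 + x2 ^ 2 + x3 * (1 - x1 - x2))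
    (hp2 : p2 ≤ 1) :
    (1 / 6) * (1 - p3) - (1 / 8) * (1 - p2) ^ 2 ≤ 3 / 32 :=
  p2_p3_bound_general p2 p3 h
end

section
/- For nonnegative reals a, b, c with a + b + c = 1: (1/6)(1 - a^3 - b^3 - c^3) - (1/8)(1 - a^2 - b^2 - c^2)^2 ≤ 3/32, with equality when a = b = 1/2, c = 0. -/
/-!
On the simplex, once `c` is the smallest coordinate, the gap `3/32 - F(a, b, c)` is an explicit
sum of nonnegative terms: a multiple of `(a - b)²` with a coefficient that is nonnegative because
`1 - 3c = (a - c) + (b - c)`, plus a multiple of `c²`. The form is symmetric, so this case is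
the general one.
-/

noncomputable def simplexForm (a b c : ℝ) : ℝ :=
  (1 / 6) * (1 - a ^ 3 - b ^ 3 - c ^ 3) - (1 / 8) * (1 - a ^ 2 - b ^ 2 - c ^ 2) ^ 2

lemma simplexForm_swap₁₃ (a b c : ℝ) : simplexForm c b a = simplexForm a b c := by
  unfold simplexForm; ring

lemma simplexForm_swap₂₃ (a b c : ℝ) : simplexForm a c b = simplexForm a b c := by
  unfold simplexForm; ring

lemma gap_simplexForm_eq {a b c : ℝ} (h : a + b + c = 1) :
    3 / 32 - simplexForm a b c =
      (a - b) ^ 2 / 8 * ((a + b) * ((a - c) + (b - c)) / 2 + (a - b) ^ 2 / 4)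
        + c ^ 2 * ((3 * c - 4 / 3) ^ 2 + 2 / 9) / 32 := by
  obtain rfl : c = 1 - a - b := by linarith
  unfold simplexForm; ring

lemma simplexForm_le_of_min {a b c : ℝ} (ha : 0 ≤ a) (hb : 0 ≤ b) (hca : c ≤ a) (hcb : c ≤ b)
    (h : a + b + c = 1) : simplexForm a b c ≤ 3 / 32 := by
  have hac : 0 ≤ a - c := sub_nonneg.mpr hca
  have hbc : 0 ≤ b - c := sub_nonneg.mpr hcb
  have : 0 ≤ 3 / 32 - simplexForm a b c := by rw [gap_simplexForm_eq h]; positivity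
  linarith

lemma simplexForm_le {a b c : ℝ} (ha : 0 ≤ a) (hb : 0 ≤ b) (hc : 0 ≤ c) (h : a + b + c = 1) :
    simplexForm a b c ≤ 3 / 32 := by
  wlog hca : c ≤ a generalizing a b c
  · rw [← simplexForm_swap₁₃]
    exact this hc hb ha (by linarith) (by linarith)
  wlog hcb : c ≤ b generalizing a b c
  · rw [← simplexForm_swap₂₃]
    exact this ha hc hb (by linarith) (by linarith) (by linarith)
  exact simplexForm_le_of_min ha hb hca hcb h

theorem three_var_simplex_bound :
    (∀ a b c : ℝ, 0 ≤ a → 0 ≤ b → 0 ≤ c → a + b + c = 1 →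
      (1 / 6) * (1 - a ^ 3 - b ^ 3 - c ^ 3)
        - (1 / 8) * (1 - a ^ 2 - b ^ 2 - c ^ 2) ^ 2 ≤ 3 / 32) ∧
    (1 / 6) * (1 - (1/2:ℝ) ^ 3 - (1/2:ℝ) ^ 3 - 0 ^ 3)
      - (1 / 8) * (1 - (1/2:ℝ) ^ 2 - (1/2:ℝ) ^ 2 - 0 ^ 2) ^ 2 = 3 / 32 :=
  ⟨fun _ _ _ ha hb hc h => simplexForm_le ha hb hc h, by norm_num⟩
end

section
/- For all reals a, b, c with a, b, c ≥ 0, a ≥ b ≥ c, and a + b + c ≤ 1, the polynomial 3/32 - (1/6)(1 - a^3 - b^3 - c^3) + (1/8)(1 - a^2 - b^2 - c + ca + cb)^2 is nonnegative, and it equals 0 at (a,b,c) = (1/2, 1/2, 0). -/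
/-!
Write `u = 1 - a - b - c`, `d = a - b`, `w = b - c`; the constraints make `u, d, w, c` nonnegative,
and `u + d + 2w + 3c = 1`. Homogenising with this relation turns the polynomial into a quartic
form in `u, d, w, c` whose only negative coefficients are those of `u d³`, `u d² w` and `u d² c`;
each of them is absorbed by a positive definite binary quadratic form in `d, u` (multiplied by
`d²`, `d w` and `d c` respectively), and everything else has nonnegative coefficients. The form
has no `w⁴` term, which is why it vanishes at `(a, b, c) = (1/2, 1/2, 0)`.
-/

noncomputable def quartic (u d w c : ℝ) : ℝ :=
  d ^ 2 * ((3 * d - 2 * u) ^ 2 / 96 + u ^ 2 / 48)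
    + d * w * ((2 * d - u) ^ 2 + 11 * u ^ 2) / 16
    + d * c * ((2 * d - u) ^ 2 + 27 * u ^ 2) / 32
    + c ^ 2 * (3 / 32 * c ^ 2 + 1 / 4 * w * c + 1 / 4 * w ^ 2 + 1 / 8 * d * c + 1 / 4 * d * w
        + 1 / 16 * d ^ 2)
    + d ^ 2 * w * (c + w) / 4
    + u * (1 / 8 * c ^ 3 + 5 / 4 * w * c ^ 2 + w ^ 2 * c + 5 / 8 * d * c ^ 2 + d * w * c)
    + u ^ 2 * (11 / 16 * c ^ 2 + 7 / 4 * w * c + 3 / 4 * w ^ 2)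
    + u ^ 3 * (3 / 8 * c + 5 / 12 * w + 5 / 24 * d)
    + 5 / 96 * u ^ 4

theorem quartic_nonneg {u d w c : ℝ} (hu : 0 ≤ u) (hd : 0 ≤ d) (hw : 0 ≤ w) (hc : 0 ≤ c) :
    0 ≤ quartic u d w c := by
  unfold quartic
  positivity

theorem poly_eq_quartic (a b c : ℝ) :
    3 / 32 - (1 / 6) * (1 - a ^ 3 - b ^ 3 - c ^ 3)
        + (1 / 8) * (1 - a ^ 2 - b ^ 2 - c + c * a + c * b) ^ 2
      = quartic (1 - a - b - c) (a - b) (b - c) c := by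
  unfold quartic
  ring

theorem final_poly_nonneg :
    (∀ a b c : ℝ, 0 ≤ a → 0 ≤ b → 0 ≤ c → c ≤ b → b ≤ a → a + b + c ≤ 1 →
      0 ≤ 3 / 32 - (1 / 6) * (1 - a ^ 3 - b ^ 3 - c ^ 3)
          + (1 / 8) * (1 - a ^ 2 - b ^ 2 - c + c * a + c * b) ^ 2) ∧
    3 / 32 - (1 / 6) * (1 - (1/2:ℝ) ^ 3 - (1/2:ℝ) ^ 3 - 0 ^ 3)
      + (1 / 8) * (1 - (1/2:ℝ) ^ 2 - (1/2:ℝ) ^ 2 - 0 + 0 * (1/2:ℝ) + 0 * (1/2:ℝ)) ^ 2 = 0 := by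
  refine ⟨fun a b c _ _ hc hcb hba habc => ?_, by norm_num⟩
  rw [poly_eq_quartic]
  exact quartic_nonneg (by linarith) (by linarith) (by linarith) hc
end
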